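/- Fix n ≥ 1, γ ∈ ℝ^{k+1}, and M > 0. Let x_1, …, x_n ∈ ℝ^k be fixed presence covariates and x_{n+1}, x_{n+2}, … ∈ ℝ^k pseudo-absence covariates, all with ‖x_i‖ ≤ M. For each m > n let p_i(m) be the pseudo-absence logistic probabilities, with log(p_i/(1−p_i)) = γ_0 − log(m−n) + Σ_{j=1}^k x_{ij} γ_j, and let λ_i(γ − J_m) = exp(γ_0 − log m + Σ_j x_{ij} γ_j). Then there exist C > 0 and m_0 such that for all m ≥ m_0 and all i ≤ m, |log p_i(m) − log λ_i(γ − J_m)| ≤ C/m, and consequently |Σ_{i=1}^m p_i(m) − Σ_{i=1}^m λ_i(γ − J_m)| ≤ C/m. That is, under the intercept-shifted parametrization β = γ − J_m, the logistic success probabilities agree with the Poisson point-process intensities uniformly to order O(m^{-1}). -/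

import Mathlib

open Real Finset Filter

noncomputable section

/-- The intensity `λ_i(β) = exp(β_0 + Σ_{j=1}^k x_{ij} β_j)`. -/
def lam {k : ℕ} (x : ℕ → Fin k → ℝ) (β : Fin (k + 1) → ℝ) (i : ℕ) : ℝ :=
  Real.exp (β 0 + ∑ j : Fin k, x i j * β j.succ)

/-- The weighted Poisson point-process log-likelihood
`l_ppm(β; w) = Σ_{i=1}^n log λ_i(β) − Σ_{i=1}^m w_i λ_i(β)`
(points are indexed `0, …, m-1`, the presences being `0, …, n-1`). -/
def lppm {k : ℕ} (n m : ℕ) (x : ℕ → Fin k → ℝ) (w : ℕ → ℝ) (β : Fin (k + 1) → ℝ) : ℝ :=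
  (∑ i ∈ Finset.range n, Real.log (lam x β i)) - ∑ i ∈ Finset.range m, w i * lam x β i

/-- The vector `J_c = (log c, 0, …, 0) ∈ ℝ^{k+1}`. -/
def Jvec {k : ℕ} (c : ℝ) : Fin (k + 1) → ℝ := fun j => if j = 0 then Real.log c else 0

/-! Writing `a_i = λ_i(γ)` and `d = m - n`, the logit relation says `p_i = a_i / (d + a_i)`,
while `λ_i(γ - J_m) = a_i / m`. The two denominators differ by `|n - a_i|`, which is bounded
because the covariates are, so both the log-ratio and the difference are `O(1/d) = O(1/m)`;
summing the `O(1/m²)` differences over the `m` points keeps the total `O(1/m)`. -/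

lemma lam_sub_Jvec {k : ℕ} (x : ℕ → Fin k → ℝ) (γ : Fin (k + 1) → ℝ) {c : ℝ} (hc : 0 < c)
    (i : ℕ) : lam x (γ - Jvec c) i = lam x γ i / c := by
  simp only [lam, Jvec, Pi.sub_apply, if_true, Fin.succ_ne_zero, if_false, sub_zero]
  rw [sub_add_eq_add_sub, Real.exp_sub, Real.exp_log hc]

lemma lam_le_exp_of_norm_le {k : ℕ} {x : ℕ → Fin k → ℝ} (γ : Fin (k + 1) → ℝ) {M : ℝ} {i : ℕ}
    (hx : ‖x i‖ ≤ M) : lam x γ i ≤ Real.exp (|γ 0| + M * ∑ j : Fin k, |γ j.succ|) := by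
  have hlin : |∑ j : Fin k, x i j * γ j.succ| ≤ M * ∑ j : Fin k, |γ j.succ| :=
    calc |∑ j : Fin k, x i j * γ j.succ| ≤ ∑ j : Fin k, |x i j| * |γ j.succ| := by
          simpa only [abs_mul] using Finset.abs_sum_le_sum_abs (fun j : Fin k => x i j * γ j.succ) _
      _ ≤ ∑ j : Fin k, M * |γ j.succ| := by
          gcongr with j
          exact (norm_le_pi_norm (x i) j).trans hx
      _ = M * ∑ j : Fin k, |γ j.succ| := (Finset.mul_sum _ _ _).symm
  exact Real.exp_le_exp.mpr (add_le_add (le_abs_self _) (abs_le.mp hlin).2)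

lemma eq_div_add_of_log_odds {p a d : ℝ} (hp : p ∈ Set.Ioo 0 1) (ha : 0 < a) (hd : 0 < d)
    (h : Real.log (p / (1 - p)) = Real.log a - Real.log d) : p = a / (d + a) := by
  obtain ⟨hp0, hp1⟩ := hp
  have hodds : p / (1 - p) = a / d := by
    rw [← Real.log_div ha.ne' hd.ne'] at h
    exact Real.log_injOn_pos (div_pos hp0 (by linarith)) (div_pos ha hd) h
  rw [div_eq_div_iff (by linarith) hd.ne'] at hodds
  rw [eq_div_iff (add_pos hd ha).ne']
  linarith

lemma abs_log_sub_log_le {c u v : ℝ} (hc : 0 < c) (hu : c ≤ u) (hv : c ≤ v) :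
    |Real.log u - Real.log v| ≤ |u - v| / c := by
  have key : ∀ {u v : ℝ}, c ≤ u → c ≤ v → Real.log u - Real.log v ≤ |u - v| / c := by
    intro u v hu hv
    have hv0 : 0 < v := hc.trans_le hv
    calc Real.log u - Real.log v = Real.log (u / v) := (Real.log_div (by linarith) hv0.ne').symm
      _ ≤ u / v - 1 := Real.log_le_sub_one_of_pos (div_pos (by linarith) hv0)
      _ = (u - v) / v := by field_simp
      _ ≤ |u - v| / v := by gcongr; exact le_abs_self _
      _ ≤ |u - v| / c := div_le_div_of_nonneg_left (abs_nonneg _) hc hv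
  rw [abs_le]
  refine ⟨?_, key hu hv⟩
  have := key hv hu
  rw [abs_sub_comm] at this
  linarith

lemma abs_log_div_add_sub_log_div_le {a d m : ℝ} (ha : 0 < a) (hd : 0 < d) (hdm : d ≤ m) :
    |Real.log (a / (d + a)) - Real.log (a / m)| ≤ |m - d - a| / d := by
  have hm : 0 < m := hd.trans_le hdm
  rw [Real.log_div ha.ne' (add_pos hd ha).ne', Real.log_div ha.ne' hm.ne',
    show Real.log a - Real.log (d + a) - (Real.log a - Real.log m)
      = Real.log m - Real.log (d + a) by ring, sub_sub]
  exact abs_log_sub_log_le hd hdm (by linarith)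

lemma abs_div_add_sub_div_le {a d m : ℝ} (ha : 0 < a) (hd : 0 < d) (hm : 0 < m) :
    |a / (d + a) - a / m| ≤ a * |m - d - a| / (d * m) := by
  rw [div_sub_div _ _ (add_pos hd ha).ne' hm.ne',
    show a * m - (d + a) * a = a * (m - d - a) by ring,
    abs_div, abs_mul, abs_of_pos ha, abs_of_pos (mul_pos (add_pos hd ha) hm)]
  gcongr
  linarith

lemma div_sub_le_two_mul_div {B m n : ℝ} (hB : 0 ≤ B) (hm : 0 < m) (hnm : 2 * n ≤ m) :
    B / (m - n) ≤ 2 * B / m := by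
  rw [div_le_div_iff₀ (by linarith) hm]
  nlinarith

section LogisticVsIntensity

variable {a A n m : ℝ} (ha : 0 < a) (haA : a ≤ A) (hn : 0 ≤ n) (hm : 0 < m) (hnm : 2 * n ≤ m)
include ha haA hn hm hnm

lemma abs_log_logistic_sub_log_intensity_le :
    |Real.log (a / ((m - n) + a)) - Real.log (a / m)| ≤ 2 * (n + A) / m := by
  have hd : 0 < m - n := by linarith
  calc _ ≤ |m - (m - n) - a| / (m - n) := abs_log_div_add_sub_log_div_le ha hd (by linarith)
    _ ≤ (n + A) / (m - n) := by gcongr; rw [abs_le]; constructor <;> linarith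
    _ ≤ 2 * (n + A) / m := div_sub_le_two_mul_div (by linarith) hm hnm

lemma abs_logistic_sub_intensity_le :
    |a / ((m - n) + a) - a / m| ≤ 2 * A * (n + A) / m ^ 2 := by
  have hd : 0 < m - n := by linarith
  have hgap : |m - (m - n) - a| ≤ n + A := by rw [abs_le]; constructor <;> linarith
  calc _ ≤ a * |m - (m - n) - a| / ((m - n) * m) := abs_div_add_sub_div_le ha hd hm
    _ ≤ A * (n + A) / (m - n) / m := by
        rw [div_div]
        exact div_le_div_of_nonneg_right (mul_le_mul haA hgap (abs_nonneg _) (by linarith))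
          (mul_pos hd hm).le
    _ ≤ 2 * (A * (n + A)) / m / m :=
        div_le_div_of_nonneg_right (div_sub_le_two_mul_div (by nlinarith) hm hnm) hm.le
    _ = 2 * A * (n + A) / m ^ 2 := by ring

end LogisticVsIntensity

theorem stmt_14_general {k : ℕ} (n : ℕ) (γ : Fin (k + 1) → ℝ) (M : ℝ)
    (x : ℕ → Fin k → ℝ) (hx : ∀ i, ‖x i‖ ≤ M)
    (p : ℕ → ℕ → ℝ)
    (hp01 : ∀ m, n < m → ∀ i < m, p m i ∈ Set.Ioo (0 : ℝ) 1)
    (hlogit : ∀ m, n < m → ∀ i < m,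
      Real.log (p m i / (1 - p m i)) =
        γ 0 - Real.log ((m : ℝ) - n) + ∑ j : Fin k, x i j * γ j.succ) :
    ∃ C > (0 : ℝ), ∃ m₀ : ℕ, n < m₀ ∧ ∀ m ≥ m₀,
      (∀ i < m,
          |Real.log (p m i) - Real.log (lam x (γ - Jvec (m : ℝ)) i)| ≤ C / m) ∧
        |(∑ i ∈ Finset.range m, p m i) -
            ∑ i ∈ Finset.range m, lam x (γ - Jvec (m : ℝ)) i| ≤ C / m := by
  set A := Real.exp (|γ 0| + M * ∑ j : Fin k, |γ j.succ|)
  have hA : 0 < A := Real.exp_pos _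
  refine ⟨2 * (n + A) * (1 + A), by positivity, 2 * n + 1, by omega, fun m hm => ?_⟩
  have hnm : n < m := by omega
  have hm0 : (0 : ℝ) < m := by exact_mod_cast (show 0 < m by omega)
  have h2n : 2 * (n : ℝ) ≤ m := by exact_mod_cast (show 2 * n ≤ m by omega)
  have hp : ∀ i < m, p m i = lam x γ i / ((m - n) + lam x γ i) := fun i hi =>
    eq_div_add_of_log_odds (hp01 m hnm i hi) (Real.exp_pos _) (by linarith) <| by
      rw [hlogit m hnm i hi, lam, Real.log_exp]; ring
  have hlam := lam_sub_Jvec x γ hm0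
  have hlamA : ∀ i, lam x γ i ≤ A := fun i => lam_le_exp_of_norm_le γ (hx i)
  constructor
  · intro i hi
    rw [hp i hi, hlam]
    exact (abs_log_logistic_sub_log_intensity_le (Real.exp_pos _) (hlamA i) n.cast_nonneg
      hm0 h2n).trans (div_le_div_of_nonneg_right (by nlinarith) hm0.le)
  · rw [← sum_sub_distrib]
    calc _ ≤ ∑ i ∈ range m, |p m i - lam x (γ - Jvec (m : ℝ)) i| := abs_sum_le_sum_abs _ _
      _ ≤ m * (2 * A * (n + A) / m ^ 2) := by
          have hterm : ∀ i ∈ range m,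
              |p m i - lam x (γ - Jvec (m : ℝ)) i| ≤ 2 * A * (n + A) / m ^ 2 := fun i hi => by
            rw [hp i (mem_range.mp hi), hlam]
            exact abs_logistic_sub_intensity_le (Real.exp_pos _) (hlamA i) n.cast_nonneg hm0 h2n
          simpa using sum_le_card_nsmul _ _ _ hterm
      _ = 2 * A * (n + A) / m := by field_simp
      _ ≤ 2 * (n + A) * (1 + A) / m := div_le_div_of_nonneg_right (by nlinarith) hm0.le

/-- Under the intercept-shifted parametrization `β = γ − J_m`, the pseudo-absence
logistic success probabilities `p_i(m)` (with
`log(p_i/(1−p_i)) = γ_0 − log(m−n) + Σ_j x_{ij} γ_j`) agree with the Poisson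
point-process intensities `λ_i(γ − J_m)` uniformly to order `O(m^{-1})`:
there are `C > 0` and `m₀` such that for all `m ≥ m₀`,
`|log p_i(m) − log λ_i(γ − J_m)| ≤ C/m` for every `i ≤ m`, and consequently
`|Σ_{i=1}^m p_i(m) − Σ_{i=1}^m λ_i(γ − J_m)| ≤ C/m`. -/
theorem stmt_14 {k : ℕ} (n : ℕ) (hn : 1 ≤ n) (γ : Fin (k + 1) → ℝ) (M : ℝ) (hM : 0 < M)
    (x : ℕ → Fin k → ℝ) (hx : ∀ i, ‖x i‖ ≤ M)
    (p : ℕ → ℕ → ℝ)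
    (hp01 : ∀ m, n < m → ∀ i < m, p m i ∈ Set.Ioo (0 : ℝ) 1)
    (hlogit : ∀ m, n < m → ∀ i < m,
      Real.log (p m i / (1 - p m i)) =
        γ 0 - Real.log ((m : ℝ) - n) + ∑ j : Fin k, x i j * γ j.succ) :
    ∃ C > (0 : ℝ), ∃ m₀ : ℕ, n < m₀ ∧ ∀ m ≥ m₀,
      (∀ i < m,
          |Real.log (p m i) - Real.log (lam x (γ - Jvec (m : ℝ)) i)| ≤ C / m) ∧
        |(∑ i ∈ Finset.range m, p m i) -
            ∑ i ∈ Finset.range m, lam x (γ - Jvec (m : ℝ)) i| ≤ C / m :=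
  stmt_14_general n γ M x hx p hp01 hlogit
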